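/- Let d ≥ 2, γ ∈ ((d-1)/d, 1), and m ∈ ℕ with mγ ≥ 1, m(1−γ) ≥ 4. With the sawtooth function f and a_{n,k} as above, define Ω := {(x',x_d) : x' ∈ (0,1)^{d-1}, 0 ≤ x_d < f(x')} ∪ ((−2,2)^{d-1} × (−2,0)) and u_{n,k}(x) := sin(2^{γmn}(x_d − a_{n,k})) for x' ∈ Q(n,k) and x_d ≥ a_{n,k}, and u_{n,k}(x) := 0 otherwise. Then ∫_Ω |u_{n,k}|² ≥ b₂·2^{−(d−1)mn}·2^{−γmn} and ∫_Ω |∇u_{n,k}|² ≤ b_∇·2^{−(d−1)mn}·2^{γmn}, where b₂ = 2^{−(d−1)}∫₀^{1/8}|sin t|² dt and b_∇ = ∫₀¹ |cos t|² dt. -/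

import Mathlib

/-- The tent function `ψ(x') = (1/2 − ‖x' − (1/2,…,1/2)‖_∞)·1_{(0,1)^{n}}(x')`
(the norm on `Fin n → ℝ` is the sup norm). -/
noncomputable def sawPsi (n : ℕ) (x : Fin n → ℝ) : ℝ :=
  Set.indicator {y : Fin n → ℝ | ∀ i, 0 < y i ∧ y i < 1}
    (fun y => 1 / 2 - ‖y - fun _ => (1 / 2 : ℝ)‖) x

/-- `g_j(x') = Σ_{k ∈ {0,…,2^{jm}−1}^{n}} ψ(2^{jm}·x' − k)`. -/
noncomputable def sawG (n m j : ℕ) (x : Fin n → ℝ) : ℝ :=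
  ∑ k : Fin n → Fin (2 ^ (j * m)),
    sawPsi n (fun i => 2 ^ (j * m) * x i - (k i : ℝ))

/-- Partial sum `f_{N−1}(x') = Σ_{j=0}^{N−1} 2^{−γjm}·g_j(x')` (so `sawF n m γ 0 = f_{−1} ≡ 0`). -/
noncomputable def sawFpartial (n m : ℕ) (γ : ℝ) (N : ℕ) (x : Fin n → ℝ) : ℝ :=
  ∑ j ∈ Finset.range N, (2 : ℝ) ^ (-(γ * ((j : ℝ) * m))) * sawG n m j x

/-- The sawtooth boundary function `f(x') = Σ_{j=0}^∞ 2^{−γjm}·g_j(x')`. -/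
noncomputable def sawF (n m : ℕ) (γ : ℝ) (x : Fin n → ℝ) : ℝ :=
  ∑' j : ℕ, (2 : ℝ) ^ (-(γ * ((j : ℝ) * m))) * sawG n m j x

/-- The dyadic subcube `Q(n,k) = {x' : 2^{nm}·x' − k ∈ (0,1)^{d-1}}`. -/
def sawQ (dd m n : ℕ) (k : Fin dd → Fin (2 ^ (n * m))) : Set (Fin dd → ℝ) :=
  {x | ∀ i, (k i : ℝ) < 2 ^ (n * m) * x i ∧ 2 ^ (n * m) * x i < (k i : ℝ) + 1}

/-- `a_{n,k} = sup_{x' ∈ Q(n,k)} f_{n−1}(x')`. -/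
noncomputable def sawA (dd m : ℕ) (γ : ℝ) (n : ℕ) (k : Fin dd → Fin (2 ^ (n * m))) : ℝ :=
  sSup (sawFpartial dd m γ n '' sawQ dd m n k)

open MeasureTheory

/-- The Hölder domain `Ω` of the counterexample: the subgraph of the sawtooth
function `f` over `(0,1)^{d-1}` together with the box `(−2,2)^{d-1} × (−2,0)`. -/
def sawOmega (dd m : ℕ) (γ : ℝ) : Set ((Fin dd → ℝ) × ℝ) :=
  {p | ((∀ i, 0 < p.1 i ∧ p.1 i < 1) ∧ 0 ≤ p.2 ∧ p.2 < sawF dd m γ p.1) ∨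
       ((∀ i, -2 < p.1 i ∧ p.1 i < 2) ∧ -2 < p.2 ∧ p.2 < 0)}

/-- The test function `u_{n,k}(x) = sin(2^{γmn}(x_d − a_{n,k}))` for
`x' ∈ Q(n,k)`, `x_d ≥ a_{n,k}`, and `0` otherwise. -/
noncomputable def sawU (dd m : ℕ) (γ : ℝ) (n : ℕ) (k : Fin dd → Fin (2 ^ (n * m)))
    (p : (Fin dd → ℝ) × ℝ) : ℝ :=
  Set.indicator {q : (Fin dd → ℝ) × ℝ | q.1 ∈ sawQ dd m n k ∧ sawA dd m γ n k ≤ q.2}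
    (fun q => Real.sin ((2 : ℝ) ^ (γ * ((m : ℝ) * n)) * (q.2 - sawA dd m γ n k))) p

/-- The (a.e.) gradient of `u_{n,k}`: it points in the `x_d` direction with
magnitude `2^{γmn}·cos(2^{γmn}(x_d − a_{n,k}))` on the support of `u_{n,k}`. -/
noncomputable def sawGradU (dd m : ℕ) (γ : ℝ) (n : ℕ) (k : Fin dd → Fin (2 ^ (n * m)))
    (p : (Fin dd → ℝ) × ℝ) : ℝ :=
  Set.indicator {q : (Fin dd → ℝ) × ℝ | q.1 ∈ sawQ dd m n k ∧ sawA dd m γ n k ≤ q.2}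
    (fun q => (2 : ℝ) ^ (γ * ((m : ℝ) * n)) *
      Real.cos ((2 : ℝ) ^ (γ * ((m : ℝ) * n)) * (q.2 - sawA dd m γ n k))) p

/-!
On `Q(n,k)` each `g_j` with `j < n` is a single tent of slope `2^{jm}`, and `Q(n,k)` has
side `2^{-nm}`, so `f_{n-1}` oscillates there by at most
`Σ_{j<n} 2^{(1-γ)jm} 2^{-nm} ≤ 2^{-γmn} / (2^{(1-γ)m} - 1) ≤ 2^{-γmn}/8`; in particular
`a_{n,k} ≤ f_{n-1} + 2^{-γmn}/8` on `Q(n,k)`. The tail `f - f_{n-1}` is at least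
`2^{-γmn} g_n ≥ 2^{-γmn}/4` on the middle quarter cube and at most `2^{-γmn}` everywhere,
because `2^{-γm} ≤ 1/2`. Hence, with `a = a_{n,k}` and `ε = 2^{-γmn}`, the set `Ω ∩ supp u_{n,k}`
contains (middle cube) × `[a, a + ε/8)` and is contained in `Q(n,k) × [a, a + ε)`. On such
boxes the integrands depend on `x_d` only, and Fubini with the substitution
`t = 2^{γmn}(x_d - a)` gives the two bounds.
-/

open Set

section ScaledBox

variable {ι : Type*}

def scaledBox (s a b : ℝ) (c : ι → ℝ) : Set (ι → ℝ) :=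
  {x | ∀ i, c i + a < s * x i ∧ s * x i < c i + b}

variable {s a b : ℝ} {c : ι → ℝ}

lemma scaledBox_eq_pi (hs : 0 < s) :
    scaledBox s a b c = univ.pi fun i => Ioo ((c i + a) / s) ((c i + b) / s) := by
  ext x
  simp only [scaledBox, mem_ofPred_eq, mem_univ_pi, mem_Ioo, div_lt_iff₀ hs, lt_div_iff₀ hs,
    mul_comm s]

lemma measurableSet_scaledBox [Countable ι] (hs : 0 < s) : MeasurableSet (scaledBox s a b c) := by
  rw [scaledBox_eq_pi hs]
  exact MeasurableSet.univ_pi fun _ => measurableSet_Ioo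

lemma volume_scaledBox_lt_top [Fintype ι] (hs : 0 < s) :
    volume (scaledBox s a b c) < ⊤ := by
  rw [scaledBox_eq_pi hs, Real.volume_pi_Ioo]
  exact ENNReal.prod_lt_top fun _ _ => ENNReal.ofReal_lt_top

lemma volume_real_scaledBox [Fintype ι] (hs : 0 < s) (hab : a ≤ b) :
    volume.real (scaledBox s a b c) = ((b - a) / s) ^ Fintype.card ι := by
  rw [measureReal_def, scaledBox_eq_pi hs,
    Real.volume_pi_Ioo_toReal fun i => by gcongr]
  simp_rw [← sub_div, add_sub_add_left_eq_sub]
  exact Finset.prod_const _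

lemma scaledBox_mono {a' b' : ℝ} (ha : a ≤ a') (hb : b' ≤ b) :
    scaledBox s a' b' c ⊆ scaledBox s a b c :=
  fun _ hx i => ⟨by linarith [(hx i).1], by linarith [(hx i).2]⟩

lemma norm_sub_le_of_mem_scaledBox [Fintype ι] (hs : 0 < s) (hab : a ≤ b) {x y : ι → ℝ}
    (hx : x ∈ scaledBox s a b c) (hy : y ∈ scaledBox s a b c) : ‖x - y‖ ≤ (b - a) / s := by
  refine (pi_norm_le_iff_of_nonneg (div_nonneg (sub_nonneg.2 hab) hs.le)).2 fun i => ?_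
  rw [Pi.sub_apply, Real.norm_eq_abs, le_div_iff₀ hs, ← abs_of_pos hs, ← abs_mul, abs_le]
  constructor <;> nlinarith [hx i, hy i]

end ScaledBox

lemma lt_and_lt_add_one_of_natDiv {c q : ℕ} (hq : 0 < q) {t : ℝ}
    (h : (c : ℝ) < q * t ∧ q * t < c + 1) : ((c / q : ℕ) : ℝ) < t ∧ t < (c / q : ℕ) + 1 := by
  have hq' : (0 : ℝ) < q := by exact_mod_cast hq
  have hlow : ((c / q : ℕ) : ℝ) * q ≤ c := by exact_mod_cast Nat.div_mul_le_self c q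
  have hupp : (c : ℝ) + 1 ≤ (c / q : ℕ) * q + q := by exact_mod_cast Nat.lt_div_mul_add hq
  constructor <;> nlinarith

lemma geom_sum_le_pow_div_sub_one {R : ℝ} (hR : 1 < R) (n : ℕ) :
    ∑ j ∈ Finset.range n, R ^ j ≤ R ^ n / (R - 1) := by
  rw [le_div_iff₀ (sub_pos.2 hR), geom_sum_mul]
  linarith

lemma tsum_nat_add_le_of_le_geometric {a : ℕ → ℝ} {r : ℝ} (hr0 : 0 ≤ r) (hr : r ≤ 1 / 2)
    (ha0 : ∀ j, 0 ≤ a j) (ha : ∀ j, a j ≤ r ^ j / 2) (n : ℕ) :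
    ∑' j, a (j + n) ≤ r ^ n := by
  have hgeom := summable_geometric_of_lt_one hr0 (by linarith)
  have hsum : Summable a := .of_nonneg_of_le ha0 ha (hgeom.div_const 2)
  calc ∑' j, a (j + n) ≤ ∑' j, r ^ n / 2 * r ^ j :=
        ((summable_nat_add_iff n).2 hsum).tsum_le_tsum
          (fun j => (ha _).trans_eq (by ring)) (hgeom.mul_left _)
    _ = r ^ n / 2 * (1 - r)⁻¹ := by rw [tsum_mul_left, tsum_geometric_of_lt_one hr0 (by linarith)]
    _ ≤ r ^ n / 2 * 2 := by
        gcongr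
        rw [inv_le_comm₀ (by linarith) two_pos]
        linarith
    _ = r ^ n := by ring

lemma two_rpow_neg_mul_natCast (γ : ℝ) (m j : ℕ) :
    (2 : ℝ) ^ (-(γ * ((j : ℝ) * m))) = ((2 : ℝ) ^ (-(γ * m))) ^ j := by
  rw [← Real.rpow_natCast, ← Real.rpow_mul zero_le_two]
  ring_nf

lemma two_rpow_neg_mul_le_half {m : ℕ} {γ : ℝ} (hm1 : 1 ≤ (m : ℝ) * γ) :
    (2 : ℝ) ^ (-(γ * m)) ≤ 1 / 2 := by
  rw [show (1 / 2 : ℝ) = 2 ^ (-1 : ℝ) by norm_num]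
  exact Real.rpow_le_rpow_of_exponent_le one_le_two (by linarith)

lemma sixteen_le_two_rpow_mul {m : ℕ} {γ : ℝ} (hm2 : 4 ≤ (m : ℝ) * (1 - γ)) :
    16 ≤ (2 : ℝ) ^ (-(γ * m)) * 2 ^ m := by
  rw [← Real.rpow_natCast 2 m, ← Real.rpow_add two_pos,
    show (16 : ℝ) = 2 ^ (4 : ℝ) by norm_num]
  exact Real.rpow_le_rpow_of_exponent_le one_le_two (by linarith)

lemma div_two_pow_pow (c : ℝ) (dd m n : ℕ) :
    (c / 2 ^ (n * m)) ^ dd = c ^ dd * (2 : ℝ) ^ (-((dd : ℝ) * ((m : ℝ) * n))) := by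
  rw [div_pow, div_eq_mul_inv, ← pow_mul]
  congr 1
  rw [← Real.rpow_natCast, ← Real.rpow_neg zero_le_two]
  push_cast
  ring_nf

lemma setIntegral_indicator_sq {α : Type*} [MeasurableSpace α] {μ : Measure α} {s t : Set α}
    (ht : MeasurableSet t) (φ : α → ℝ) :
    ∫ p in s, t.indicator φ p ^ 2 ∂μ = ∫ p in s ∩ t, φ p ^ 2 ∂μ := by
  have hsq : ∀ p, t.indicator φ p ^ 2 = t.indicator (fun p => φ p ^ 2) p := fun p => by
    by_cases hp : p ∈ t <;> simp [hp]
  simp_rw [hsq]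
  exact setIntegral_indicator ht

lemma setIntegral_Ico_comp_mul_sub (h : ℝ → ℝ) {T : ℝ} (hT : 0 < T) (A : ℝ) {b : ℝ}
    (hb : 0 ≤ b) : ∫ t in Ico A (A + b), h (T * (t - A)) = T⁻¹ * ∫ t in 0..T * b, h t := by
  rw [integral_Ico_eq_integral_Ioo, ← integral_Ioc_eq_integral_Ioo,
    ← intervalIntegral.integral_of_le (by linarith),
    intervalIntegral.integral_comp_sub_right (fun t => h (T * t)), sub_self, add_sub_cancel_left,
    intervalIntegral.integral_comp_mul_left h hT.ne', smul_eq_mul, mul_zero]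

lemma setIntegral_prod_Ico_comp_mul_sub {α : Type*} [MeasurableSpace α] {μ : Measure α}
    [SFinite μ] (s : Set α) (h : ℝ → ℝ) {T : ℝ} (hT : 0 < T) (A : ℝ) {b : ℝ} (hb : 0 ≤ b) :
    ∫ p in s ×ˢ Ico A (A + b), h (T * (p.2 - A)) ∂μ.prod volume =
      μ.real s * (T⁻¹ * ∫ t in 0..T * b, h t) := by
  have := setIntegral_prod_mul (μ := μ) (ν := volume) (fun _ => (1 : ℝ))
    (fun t => h (T * (t - A))) s (Ico A (A + b))
  simp only [one_mul] at this
  rw [this, setIntegral_const, smul_eq_mul, mul_one, setIntegral_Ico_comp_mul_sub h hT A hb]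

lemma integrableOn_prod_comp_snd {α : Type*} [MeasurableSpace α] {μ : Measure α} [SFinite μ]
    {s : Set α} (hs : μ s ≠ ⊤) {t : Set ℝ} (ht : volume t ≠ ⊤) {h : ℝ → ℝ} (hh : Measurable h)
    {M : ℝ} (hM : ∀ y, |h y| ≤ M) :
    IntegrableOn (fun p : α × ℝ => h p.2) (s ×ˢ t) (μ.prod volume) :=
  Measure.integrableOn_of_bounded (by rw [Measure.prod_prod]; exact ENNReal.mul_ne_top hs ht)
    (hh.comp measurable_snd).aestronglyMeasurable (M := M) (.of_forall fun p => hM p.2)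

section Sawtooth

variable {dd m : ℕ} {γ : ℝ}

lemma sawPsi_eq_max (y : Fin dd → ℝ) :
    sawPsi dd y = max (1 / 2 - ‖y - fun _ => (1 / 2 : ℝ)‖) 0 := by
  by_cases hy : ∀ i, 0 < y i ∧ y i < 1
  · have hnorm : ‖y - fun _ => (1 / 2 : ℝ)‖ ≤ 1 / 2 :=
      (pi_norm_le_iff_of_nonneg (by norm_num)).2 fun i => by
        rw [Pi.sub_apply, Real.norm_eq_abs, abs_le]
        constructor <;> linarith [hy i]
    rw [sawPsi, indicator_of_mem (show y ∈ {y : Fin dd → ℝ | ∀ i, 0 < y i ∧ y i < 1} from hy),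
      max_eq_left (by linarith)]
  · push Not at hy
    obtain ⟨i, hi⟩ := hy
    have hcoord : 1 / 2 ≤ |y i - 1 / 2| := by
      by_cases h0 : 0 < y i
      · exact le_abs.2 (Or.inl (by linarith [hi h0]))
      · exact le_abs.2 (Or.inr (by linarith))
    have hnorm : |y i - 1 / 2| ≤ ‖y - fun _ => (1 / 2 : ℝ)‖ := by
      calc |y i - 1 / 2| = ‖((y - fun _ => (1 / 2 : ℝ)) : Fin dd → ℝ) i‖ :=
          (Real.norm_eq_abs _).symm
        _ ≤ _ := norm_le_pi_norm _ i
    rw [sawPsi, indicator_of_notMem (fun h => by linarith [hi (h i).1, (h i).2]),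
      max_eq_right (by linarith)]

lemma sawPsi_nonneg (y : Fin dd → ℝ) : 0 ≤ sawPsi dd y := by
  rw [sawPsi_eq_max]
  exact le_max_right _ _

lemma sawPsi_le_half (y : Fin dd → ℝ) : sawPsi dd y ≤ 1 / 2 := by
  rw [sawPsi_eq_max]
  exact max_le (by linarith [norm_nonneg (y - fun _ => (1 / 2 : ℝ))]) (by norm_num)

lemma lipschitzWith_sawPsi : LipschitzWith 1 (sawPsi dd) := by
  refine LipschitzWith.of_dist_le_mul fun x y => ?_
  rw [sawPsi_eq_max, sawPsi_eq_max, Real.dist_eq, NNReal.coe_one, one_mul, dist_eq_norm]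
  refine (abs_max_sub_max_le_abs _ _ _).trans ?_
  have h := abs_norm_sub_norm_le (y - fun _ => (1 / 2 : ℝ)) (x - fun _ => (1 / 2 : ℝ))
  rw [sub_sub_sub_cancel_right] at h
  rw [sub_sub_sub_cancel_left]
  exact h.trans_eq (norm_sub_rev _ _)

lemma sawQ_eq_scaledBox {n : ℕ} (k : Fin dd → Fin (2 ^ (n * m))) :
    sawQ dd m n k = scaledBox (2 ^ (n * m)) 0 1 fun i => (k i : ℝ) := by
  simp only [sawQ, scaledBox, add_zero]

lemma scaledBox_quarter_subset_sawQ {n : ℕ} (k : Fin dd → Fin (2 ^ (n * m))) :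
    (scaledBox (2 ^ (n * m)) (1 / 4) (3 / 4) fun i => (k i : ℝ)) ⊆ sawQ dd m n k := by
  rw [sawQ_eq_scaledBox]
  exact scaledBox_mono (by norm_num) (by norm_num)

lemma sawQ_nonempty {n : ℕ} (k : Fin dd → Fin (2 ^ (n * m))) : (sawQ dd m n k).Nonempty := by
  refine ⟨fun i => ((k i : ℝ) + 1 / 2) / 2 ^ (n * m), fun i => ?_⟩
  rw [mul_div_cancel₀ _ (by positivity)]
  constructor <;> linarith

lemma eq_of_mem_sawQ_of_mem_sawQ {j : ℕ} {k k' : Fin dd → Fin (2 ^ (j * m))} {x : Fin dd → ℝ}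
    (hk : x ∈ sawQ dd m j k) (hk' : x ∈ sawQ dd m j k') : k = k' := by
  funext i
  have h₁ : ((k i : ℕ) : ℝ) < (k' i : ℕ) + 1 := (hk i).1.trans (hk' i).2
  have h₂ : ((k' i : ℕ) : ℝ) < (k i : ℕ) + 1 := (hk' i).1.trans (hk i).2
  have h₁' : (k i : ℕ) < k' i + 1 := by exact_mod_cast h₁
  have h₂' : (k' i : ℕ) < k i + 1 := by exact_mod_cast h₂
  exact Fin.ext (by omega)

lemma mem_sawQ_of_sawPsi_ne_zero {j : ℕ} {k : Fin dd → Fin (2 ^ (j * m))} {x : Fin dd → ℝ}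
    (h : sawPsi dd (fun i => 2 ^ (j * m) * x i - k i) ≠ 0) : x ∈ sawQ dd m j k := by
  by_contra hx
  refine h (indicator_of_notMem (fun hy => hx fun i => ?_) _)
  constructor <;> linarith [(hy i).1, (hy i).2]

lemma sawG_eq_of_mem_sawQ {j : ℕ} {k : Fin dd → Fin (2 ^ (j * m))} {x : Fin dd → ℝ}
    (hx : x ∈ sawQ dd m j k) : sawG dd m j x = sawPsi dd (fun i => 2 ^ (j * m) * x i - k i) :=
  Finset.sum_eq_single k
    (fun _ _ hk' => by_contra fun h =>
      hk' (eq_of_mem_sawQ_of_mem_sawQ (mem_sawQ_of_sawPsi_ne_zero h) hx))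
    (fun h => absurd (Finset.mem_univ k) h)

lemma sawG_nonneg (j : ℕ) (x : Fin dd → ℝ) : 0 ≤ sawG dd m j x :=
  Finset.sum_nonneg fun _ _ => sawPsi_nonneg _

lemma sawG_le_half (j : ℕ) (x : Fin dd → ℝ) : sawG dd m j x ≤ 1 / 2 := by
  by_cases hx : ∃ k, x ∈ sawQ dd m j k
  · obtain ⟨k, hk⟩ := hx
    rw [sawG_eq_of_mem_sawQ hk]
    exact sawPsi_le_half _
  · push Not at hx
    rw [sawG, Finset.sum_eq_zero fun k _ =>
      not_not.1 fun h => hx k (mem_sawQ_of_sawPsi_ne_zero h)]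
    norm_num

lemma quarter_le_sawG {n : ℕ} {k : Fin dd → Fin (2 ^ (n * m))} {x : Fin dd → ℝ}
    (hx : x ∈ scaledBox (2 ^ (n * m)) (1 / 4) (3 / 4) fun i => (k i : ℝ)) :
    1 / 4 ≤ sawG dd m n x := by
  have hnorm : ‖(fun i => 2 ^ (n * m) * x i - k i) - fun _ => (1 / 2 : ℝ)‖ ≤ 1 / 4 :=
    (pi_norm_le_iff_of_nonneg (by norm_num)).2 fun i => by
      rw [Pi.sub_apply, Real.norm_eq_abs, abs_le]
      constructor <;> linarith [hx i]
  rw [sawG_eq_of_mem_sawQ (scaledBox_quarter_subset_sawQ k hx), sawPsi_eq_max]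
  exact le_max_of_le_left (by linarith)

def sawParent {n j : ℕ} (hj : j ≤ n) (k : Fin dd → Fin (2 ^ (n * m))) (i : Fin dd) :
    Fin (2 ^ (j * m)) :=
  ⟨k i / 2 ^ ((n - j) * m), Nat.div_lt_of_lt_mul <| by
    rw [← pow_add, ← add_mul, Nat.sub_add_cancel hj]
    exact (k i).is_lt⟩

lemma sawQ_subset_sawQ_sawParent {n j : ℕ} (hj : j ≤ n) (k : Fin dd → Fin (2 ^ (n * m))) :
    sawQ dd m n k ⊆ sawQ dd m j (sawParent hj k) := by
  intro x hx i
  have hsplit : (2 : ℝ) ^ (n * m) * x i = ((2 ^ ((n - j) * m) : ℕ) : ℝ) * (2 ^ (j * m) * x i) := by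
    rw [← mul_assoc, Nat.cast_pow, Nat.cast_ofNat, ← pow_add, ← add_mul, Nat.sub_add_cancel hj]
  have h := hx i
  rw [hsplit] at h
  exact lt_and_lt_add_one_of_natDiv (by positivity) h

lemma sawG_sub_sawG_le {n j : ℕ} (hj : j ≤ n) {k : Fin dd → Fin (2 ^ (n * m))}
    {x y : Fin dd → ℝ} (hx : x ∈ sawQ dd m n k) (hy : y ∈ sawQ dd m n k) :
    sawG dd m j x - sawG dd m j y ≤ (2 : ℝ) ^ (j * m) / 2 ^ (n * m) := by
  rw [sawG_eq_of_mem_sawQ (sawQ_subset_sawQ_sawParent hj k hx),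
    sawG_eq_of_mem_sawQ (sawQ_subset_sawQ_sawParent hj k hy)]
  rw [sawQ_eq_scaledBox] at hx hy
  have hxy := norm_sub_le_of_mem_scaledBox (by positivity) zero_le_one hx hy
  calc _ ≤ dist (sawPsi dd fun i => 2 ^ (j * m) * x i - (sawParent hj k i : ℕ))
          (sawPsi dd fun i => 2 ^ (j * m) * y i - (sawParent hj k i : ℕ)) :=
        (le_abs_self _).trans_eq (Real.dist_eq _ _).symm
    _ ≤ dist (fun i => 2 ^ (j * m) * x i - (sawParent hj k i : ℕ))
          (fun i => 2 ^ (j * m) * y i - (sawParent hj k i : ℕ)) := by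
        simpa only [NNReal.coe_one, one_mul] using lipschitzWith_sawPsi.dist_le_mul _ _
    _ = (2 : ℝ) ^ (j * m) * ‖x - y‖ := by
        have hdiff : ((fun i => 2 ^ (j * m) * x i - (sawParent hj k i : ℕ)) -
            fun i => 2 ^ (j * m) * y i - (sawParent hj k i : ℕ)) = (2 : ℝ) ^ (j * m) • (x - y) := by
          ext i
          simp only [Pi.sub_apply, Pi.smul_apply, smul_eq_mul]
          ring
        rw [dist_eq_norm, hdiff, norm_smul, Real.norm_of_nonneg (by positivity)]
    _ ≤ (2 : ℝ) ^ (j * m) / 2 ^ (n * m) := by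
        rw [sub_zero] at hxy
        rw [← mul_one_div]
        gcongr

lemma sawFpartial_sub_le (hm2 : 4 ≤ (m : ℝ) * (1 - γ)) {n : ℕ} {k : Fin dd → Fin (2 ^ (n * m))}
    {x y : Fin dd → ℝ} (hx : x ∈ sawQ dd m n k) (hy : y ∈ sawQ dd m n k) :
    sawFpartial dd m γ n x - sawFpartial dd m γ n y ≤ (2 : ℝ) ^ (-(γ * ((m : ℝ) * n))) / 8 := by
  set r : ℝ := (2 : ℝ) ^ (-(γ * m))
  set N : ℝ := (2 : ℝ) ^ m
  have hR : 16 ≤ r * N := sixteen_le_two_rpow_mul hm2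
  have hN : 0 < N := by positivity
  calc sawFpartial dd m γ n x - sawFpartial dd m γ n y
        = ∑ j ∈ Finset.range n, r ^ j * (sawG dd m j x - sawG dd m j y) := by
          simp only [sawFpartial, two_rpow_neg_mul_natCast, ← Finset.sum_sub_distrib, mul_sub, r]
    _ ≤ ∑ j ∈ Finset.range n, r ^ j * (N ^ j / N ^ n) := by
          gcongr with j hj
          simpa only [N, ← pow_mul'] using
            sawG_sub_sawG_le (Finset.mem_range.1 hj).le hx hy
    _ = (∑ j ∈ Finset.range n, (r * N) ^ j) / N ^ n := by
          rw [Finset.sum_div]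
          simp only [mul_pow, mul_div_assoc]
    _ ≤ (r * N) ^ n / (r * N - 1) / N ^ n := by
          gcongr
          exact geom_sum_le_pow_div_sub_one (by linarith) n
    _ = r ^ n / (r * N - 1) := by
          rw [mul_pow]
          field_simp
    _ ≤ r ^ n / 8 := by gcongr; linarith
    _ = (2 : ℝ) ^ (-(γ * ((m : ℝ) * n))) / 8 := by
          rw [mul_comm (m : ℝ), two_rpow_neg_mul_natCast]

lemma sawTerm_nonneg (j : ℕ) (x : Fin dd → ℝ) :
    0 ≤ (2 : ℝ) ^ (-(γ * ((j : ℝ) * m))) * sawG dd m j x :=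
  mul_nonneg (by positivity) (sawG_nonneg j x)

lemma sawTerm_le (j : ℕ) (x : Fin dd → ℝ) :
    (2 : ℝ) ^ (-(γ * ((j : ℝ) * m))) * sawG dd m j x ≤ ((2 : ℝ) ^ (-(γ * m))) ^ j / 2 := by
  rw [two_rpow_neg_mul_natCast, div_eq_mul_one_div]
  gcongr
  exact sawG_le_half j x

lemma summable_sawTerm (hm1 : 1 ≤ (m : ℝ) * γ) (x : Fin dd → ℝ) :
    Summable fun j : ℕ => (2 : ℝ) ^ (-(γ * ((j : ℝ) * m))) * sawG dd m j x :=
  .of_nonneg_of_le (sawTerm_nonneg · x) (sawTerm_le · x)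
    ((summable_geometric_of_lt_one (by positivity)
      ((two_rpow_neg_mul_le_half hm1).trans_lt (by norm_num))).div_const 2)

lemma sawF_sub_sawFpartial_eq (hm1 : 1 ≤ (m : ℝ) * γ) (n : ℕ) (x : Fin dd → ℝ) :
    sawF dd m γ x - sawFpartial dd m γ n x =
      ∑' j : ℕ, (2 : ℝ) ^ (-(γ * (((j + n : ℕ) : ℝ) * m))) * sawG dd m (j + n) x := by
  rw [sawF, sawFpartial, ← (summable_sawTerm hm1 x).sum_add_tsum_nat_add n, add_sub_cancel_left]

lemma sawF_sub_sawFpartial_le (hm1 : 1 ≤ (m : ℝ) * γ) (n : ℕ) (x : Fin dd → ℝ) :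
    sawF dd m γ x - sawFpartial dd m γ n x ≤ (2 : ℝ) ^ (-(γ * ((m : ℝ) * n))) := by
  rw [sawF_sub_sawFpartial_eq hm1, mul_comm (m : ℝ), two_rpow_neg_mul_natCast]
  exact tsum_nat_add_le_of_le_geometric (by positivity) (two_rpow_neg_mul_le_half hm1)
    (sawTerm_nonneg · x) (sawTerm_le · x) n

lemma le_sawF_sub_sawFpartial (hm1 : 1 ≤ (m : ℝ) * γ) (n : ℕ) (x : Fin dd → ℝ) :
    (2 : ℝ) ^ (-(γ * ((m : ℝ) * n))) * sawG dd m n x ≤ sawF dd m γ x - sawFpartial dd m γ n x := by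
  rw [sawF_sub_sawFpartial_eq hm1]
  have h := ((summable_nat_add_iff n).2 (summable_sawTerm hm1 x)).le_tsum 0
    fun j _ => sawTerm_nonneg (j + n) x
  rwa [zero_add, mul_comm (n : ℝ)] at h

lemma bddAbove_range_sawFpartial (n : ℕ) : BddAbove (range (sawFpartial dd m γ n)) := by
  refine ⟨∑ j ∈ Finset.range n, (2 : ℝ) ^ (-(γ * ((j : ℝ) * m))) / 2,
    forall_mem_range.2 fun x => Finset.sum_le_sum fun j _ => ?_⟩
  rw [div_eq_mul_one_div]
  gcongr
  exact sawG_le_half j x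

lemma sawFpartial_nonneg (n : ℕ) (x : Fin dd → ℝ) : 0 ≤ sawFpartial dd m γ n x :=
  Finset.sum_nonneg fun j _ => sawTerm_nonneg j x

def sawSupport (dd m : ℕ) (γ : ℝ) (n : ℕ) (k : Fin dd → Fin (2 ^ (n * m))) :
    Set ((Fin dd → ℝ) × ℝ) :=
  {p | p.1 ∈ sawQ dd m n k ∧ sawA dd m γ n k ≤ p.2 ∧ p.2 < sawF dd m γ p.1}

variable {n : ℕ} {k : Fin dd → Fin (2 ^ (n * m))} {x : Fin dd → ℝ}

lemma measurableSet_sawQ : MeasurableSet (sawQ dd m n k) := by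
  rw [sawQ_eq_scaledBox]
  exact measurableSet_scaledBox (by positivity)

lemma volume_sawQ_lt_top : volume (sawQ dd m n k) < ⊤ := by
  rw [sawQ_eq_scaledBox]
  exact volume_scaledBox_lt_top (by positivity)

lemma pos_and_lt_one_of_mem_sawQ (hx : x ∈ sawQ dd m n k) (i : Fin dd) :
    0 < x i ∧ x i < 1 := by
  have hs : (0 : ℝ) < 2 ^ (n * m) := by positivity
  have hk : ((k i : ℕ) : ℝ) + 1 ≤ 2 ^ (n * m) := by exact_mod_cast (k i).is_lt
  have hk0 : (0 : ℝ) ≤ (k i : ℕ) := Nat.cast_nonneg _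
  constructor <;> nlinarith [hx i]

lemma sawFpartial_le_sawA (hx : x ∈ sawQ dd m n k) : sawFpartial dd m γ n x ≤ sawA dd m γ n k :=
  le_csSup ((bddAbove_range_sawFpartial n).mono (image_subset_range _ _)) (mem_image_of_mem _ hx)

lemma sawA_nonneg : 0 ≤ sawA dd m γ n k :=
  let ⟨_, hx⟩ := sawQ_nonempty k
  (sawFpartial_nonneg n _).trans (sawFpartial_le_sawA hx)

lemma sawA_le_sawFpartial_add (hm2 : 4 ≤ (m : ℝ) * (1 - γ)) (hx : x ∈ sawQ dd m n k) :
    sawA dd m γ n k ≤ sawFpartial dd m γ n x + (2 : ℝ) ^ (-(γ * ((m : ℝ) * n))) / 8 :=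
  csSup_le ((sawQ_nonempty k).image _) <| forall_mem_image.2 fun _ hy => by
    linarith [sawFpartial_sub_le hm2 hy hx]

lemma sawF_le_sawA_add (hm1 : 1 ≤ (m : ℝ) * γ) (hx : x ∈ sawQ dd m n k) :
    sawF dd m γ x ≤ sawA dd m γ n k + (2 : ℝ) ^ (-(γ * ((m : ℝ) * n))) := by
  linarith [sawF_sub_sawFpartial_le hm1 n x, sawFpartial_le_sawA (γ := γ) hx]

lemma sawA_add_le_sawF (hm1 : 1 ≤ (m : ℝ) * γ) (hm2 : 4 ≤ (m : ℝ) * (1 - γ))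
    (hx : x ∈ scaledBox (2 ^ (n * m)) (1 / 4) (3 / 4) fun i => (k i : ℝ)) :
    sawA dd m γ n k + (2 : ℝ) ^ (-(γ * ((m : ℝ) * n))) / 8 ≤ sawF dd m γ x := by
  have hQ := scaledBox_quarter_subset_sawQ k hx
  have hε : (0 : ℝ) ≤ (2 : ℝ) ^ (-(γ * ((m : ℝ) * n))) := by positivity
  nlinarith [le_sawF_sub_sawFpartial hm1 n x, quarter_le_sawG hx, sawA_le_sawFpartial_add hm2 hQ]

lemma sawOmega_inter_eq_sawSupport :
    sawOmega dd m γ ∩ {q | q.1 ∈ sawQ dd m n k ∧ sawA dd m γ n k ≤ q.2} =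
      sawSupport dd m γ n k := by
  ext p
  constructor
  · rintro ⟨⟨-, -, hlt⟩ | ⟨-, -, hneg⟩, hQ, hA⟩
    · exact ⟨hQ, hA, hlt⟩
    · linarith [sawA_nonneg (γ := γ) (k := k)]
  · rintro ⟨hQ, hA, hlt⟩
    exact ⟨Or.inl ⟨pos_and_lt_one_of_mem_sawQ hQ, sawA_nonneg.trans hA, hlt⟩, hQ, hA⟩

lemma sawSupport_subset (hm1 : 1 ≤ (m : ℝ) * γ) :
    sawSupport dd m γ n k ⊆
      sawQ dd m n k ×ˢ Ico (sawA dd m γ n k) (sawA dd m γ n k + 2 ^ (-(γ * ((m : ℝ) * n)))) :=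
  fun _ ⟨hQ, hA, hlt⟩ => ⟨hQ, hA, hlt.trans_le (sawF_le_sawA_add hm1 hQ)⟩

lemma subset_sawSupport (hm1 : 1 ≤ (m : ℝ) * γ) (hm2 : 4 ≤ (m : ℝ) * (1 - γ)) :
    (scaledBox (2 ^ (n * m)) (1 / 4) (3 / 4) fun i => (k i : ℝ)) ×ˢ
        Ico (sawA dd m γ n k) (sawA dd m γ n k + 2 ^ (-(γ * ((m : ℝ) * n))) / 8) ⊆
      sawSupport dd m γ n k :=
  fun _ ⟨hx, hA, hlt⟩ =>
    ⟨scaledBox_quarter_subset_sawQ k hx, hA, hlt.trans_le (sawA_add_le_sawF hm1 hm2 hx)⟩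

lemma setIntegral_sawOmega_indicator_sq (φ : (Fin dd → ℝ) × ℝ → ℝ) :
    ∫ p in sawOmega dd m γ, {q | q.1 ∈ sawQ dd m n k ∧ sawA dd m γ n k ≤ q.2}.indicator φ p ^ 2 =
      ∫ p in sawSupport dd m γ n k, φ p ^ 2 := by
  have hS : MeasurableSet {q : (Fin dd → ℝ) × ℝ | q.1 ∈ sawQ dd m n k ∧ sawA dd m γ n k ≤ q.2} :=
    measurableSet_sawQ.prod measurableSet_Ici
  rw [setIntegral_indicator_sq hS, sawOmega_inter_eq_sawSupport]

lemma le_integral_sawU_sq (hm1 : 1 ≤ (m : ℝ) * γ) (hm2 : 4 ≤ (m : ℝ) * (1 - γ)) :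
    (1 / 2 / 2 ^ (n * m)) ^ dd *
        ((2 : ℝ) ^ (-(γ * ((m : ℝ) * n))) * ∫ t in (0 : ℝ)..(1 / 8), Real.sin t ^ 2) ≤
      ∫ p in sawOmega dd m γ, sawU dd m γ n k p ^ 2 := by
  set T : ℝ := (2 : ℝ) ^ (γ * ((m : ℝ) * n))
  set A := sawA dd m γ n k
  have hT : 0 < T := by positivity
  have hTinv : (2 : ℝ) ^ (-(γ * ((m : ℝ) * n))) = T⁻¹ := Real.rpow_neg zero_le_two _
  unfold sawU
  rw [setIntegral_sawOmega_indicator_sq, Measure.volume_eq_prod]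
  calc _ = ∫ p in (scaledBox (2 ^ (n * m)) (1 / 4) (3 / 4) fun i => (k i : ℝ)) ×ˢ
          Ico A (A + T⁻¹ / 8), Real.sin (T * (p.2 - A)) ^ 2 ∂volume.prod volume := by
        rw [setIntegral_prod_Ico_comp_mul_sub _ (fun t => Real.sin t ^ 2) hT A (by positivity),
          volume_real_scaledBox (by positivity) (by norm_num), Fintype.card_fin, hTinv,
          mul_div_assoc', mul_inv_cancel₀ hT.ne']
        norm_num
    _ ≤ _ := by
        refine setIntegral_mono_set ?_ (.of_forall fun _ => sq_nonneg _)
          (LE.le.eventuallyLE (hTinv ▸ subset_sawSupport hm1 hm2))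
        refine IntegrableOn.mono_set ?_ (hTinv ▸ sawSupport_subset hm1)
        refine integrableOn_prod_comp_snd (h := fun t => Real.sin (T * (t - A)) ^ 2)
          volume_sawQ_lt_top.ne (by simp) (by fun_prop) (M := 1) fun t => ?_
        rw [abs_of_nonneg (sq_nonneg _)]
        exact Real.sin_sq_le_one _

lemma integral_sawGradU_sq_le (hm1 : 1 ≤ (m : ℝ) * γ) :
    ∫ p in sawOmega dd m γ, sawGradU dd m γ n k p ^ 2 ≤
      (1 / 2 ^ (n * m)) ^ dd *
        ((2 : ℝ) ^ (γ * ((m : ℝ) * n)) * ∫ t in (0 : ℝ)..1, Real.cos t ^ 2) := by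
  set T : ℝ := (2 : ℝ) ^ (γ * ((m : ℝ) * n))
  set A := sawA dd m γ n k
  have hT : 0 < T := by positivity
  have hTinv : (2 : ℝ) ^ (-(γ * ((m : ℝ) * n))) = T⁻¹ := Real.rpow_neg zero_le_two _
  unfold sawGradU
  rw [setIntegral_sawOmega_indicator_sq, Measure.volume_eq_prod]
  calc _ ≤ ∫ p in sawQ dd m n k ×ˢ Ico A (A + T⁻¹), (T * Real.cos (T * (p.2 - A))) ^ 2
          ∂volume.prod volume := by
        refine setIntegral_mono_set ?_ (.of_forall fun _ => sq_nonneg _)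
          (LE.le.eventuallyLE (hTinv ▸ sawSupport_subset hm1))
        refine integrableOn_prod_comp_snd (h := fun t => (T * Real.cos (T * (t - A))) ^ 2)
          volume_sawQ_lt_top.ne (by simp) (by fun_prop) (M := T ^ 2) fun t => ?_
        rw [abs_of_nonneg (sq_nonneg _), mul_pow]
        exact mul_le_of_le_one_right (sq_nonneg T) (Real.cos_sq_le_one _)
    _ = _ := by
        rw [setIntegral_prod_Ico_comp_mul_sub _ (fun t => (T * Real.cos t) ^ 2) hT A
            (by positivity), sawQ_eq_scaledBox,
          volume_real_scaledBox (by positivity) zero_le_one, Fintype.card_fin, sub_zero,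
          mul_inv_cancel₀ hT.ne']
        simp_rw [mul_pow]
        rw [intervalIntegral.integral_const_mul]
        field_simp

end Sawtooth

theorem sawU_energy_bounds_general (d m : ℕ) (γ : ℝ) (hd : 2 ≤ d)
    (hm1 : 1 ≤ (m : ℝ) * γ) (hm2 : 4 ≤ (m : ℝ) * (1 - γ))
    (n : ℕ) (k : Fin (d - 1) → Fin (2 ^ (n * m))) :
    ((2 : ℝ) ^ (-((d : ℝ) - 1)) * ∫ t in (0 : ℝ)..(1 / 8), Real.sin t ^ 2) *
        (2 : ℝ) ^ (-(((d : ℝ) - 1) * ((m : ℝ) * n))) *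
        (2 : ℝ) ^ (-(γ * ((m : ℝ) * n))) ≤
      (∫ p in sawOmega (d - 1) m γ, (sawU (d - 1) m γ n k p) ^ 2) ∧
    (∫ p in sawOmega (d - 1) m γ, (sawGradU (d - 1) m γ n k p) ^ 2) ≤
      (∫ t in (0 : ℝ)..1, Real.cos t ^ 2) *
        (2 : ℝ) ^ (-(((d : ℝ) - 1) * ((m : ℝ) * n))) *
        (2 : ℝ) ^ (γ * ((m : ℝ) * n)) := by
  have hdim : (d : ℝ) - 1 = ((d - 1 : ℕ) : ℝ) := by
    rw [Nat.cast_sub (by omega), Nat.cast_one]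
  rw [hdim]
  constructor
  · refine le_of_eq_of_le ?_ (le_integral_sawU_sq hm1 hm2)
    rw [div_two_pow_pow, Real.rpow_neg zero_le_two, Real.rpow_natCast, one_div_pow]
    ring
  · refine (integral_sawGradU_sq_le hm1).trans_eq ?_
    rw [div_two_pow_pow, one_pow]
    ring

/-- Lemma 7.4(i): the test function `u_{n,k}` satisfies
`∫_Ω |u_{n,k}|² ≥ b₂·2^{−(d−1)mn}·2^{−γmn}` and
`∫_Ω |∇u_{n,k}|² ≤ b_∇·2^{−(d−1)mn}·2^{γmn}`, where
`b₂ = 2^{−(d−1)}·∫₀^{1/8} sin²t dt` and `b_∇ = ∫₀¹ cos²t dt`. -/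
theorem sawU_energy_bounds (d m : ℕ) (γ : ℝ) (hd : 2 ≤ d)
    (hγ1 : ((d : ℝ) - 1) / d < γ) (hγ2 : γ < 1)
    (hm1 : 1 ≤ (m : ℝ) * γ) (hm2 : 4 ≤ (m : ℝ) * (1 - γ))
    (n : ℕ) (k : Fin (d - 1) → Fin (2 ^ (n * m))) :
    ((2 : ℝ) ^ (-((d : ℝ) - 1)) * ∫ t in (0 : ℝ)..(1 / 8), Real.sin t ^ 2) *
        (2 : ℝ) ^ (-(((d : ℝ) - 1) * ((m : ℝ) * n))) *
        (2 : ℝ) ^ (-(γ * ((m : ℝ) * n))) ≤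
      (∫ p in sawOmega (d - 1) m γ, (sawU (d - 1) m γ n k p) ^ 2) ∧
    (∫ p in sawOmega (d - 1) m γ, (sawGradU (d - 1) m γ n k p) ^ 2) ≤
      (∫ t in (0 : ℝ)..1, Real.cos t ^ 2) *
        (2 : ℝ) ^ (-(((d : ℝ) - 1) * ((m : ℝ) * n))) *
        (2 : ℝ) ^ (γ * ((m : ℝ) * n)) :=
  sawU_energy_bounds_general d m γ hd hm1 hm2 n k
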